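/- arXiv:2304.08365 — 4 statements merged into one kernel-verified Lean document; each statement's English description precedes it below -/
import Mathlib

section
/- Let R ∈ ℚ[x] be a nonzero polynomial with all coefficients nonnegative and at least one positive coefficient, such that no monomial of R has degree divisible by 3. Let ξ = exp(2πi/3) be a primitive third root of unity. Then R(ξ) ≠ R(1). -/
/-!
For `3 ∤ i` the power `ξ ^ i` is again a primitive cube root of unity, so its real part is
`-1/2`. Hence `Re R(ξ) = -R(1)/2`, while `R(1) > 0` is a sum of nonnegative coefficients that are
not all zero.
-/

open Polynomial ComplexConjugate

theorem IsPrimitiveRoot.re_eq_neg_half {z : ℂ} (hz : IsPrimitiveRoot z 3) : z.re = -1 / 2 := by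
  have hsum : ∑ i ∈ Finset.range 3, z ^ i = 0 := hz.geom_sum_eq_zero (by norm_num)
  have hconj : conj z = z ^ 2 := by
    rw [← Complex.inv_eq_conj (hz.norm'_eq_one (by norm_num))]
    exact inv_eq_of_mul_eq_one_right (by rw [← pow_succ', hz.pow_eq_one])
  have htwice : ((2 * z.re : ℝ) : ℂ) = -1 := by
    rw [← Complex.add_conj, hconj]
    simp only [Finset.sum_range_succ, Finset.sum_range_zero] at hsum
    linear_combination hsum
  have : 2 * z.re = -1 := by exact_mod_cast htwice
  linarith

namespace Polynomial

theorem eval_one_pos_of_coeff_nonneg {R : Type*} [Semiring R] [PartialOrder R]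
    [IsOrderedCancelAddMonoid R] {p : R[X]} (hp : p ≠ 0) (hnonneg : ∀ i, 0 ≤ p.coeff i) :
    0 < p.eval 1 := by
  rw [eval_eq_sum, sum_def]
  simp only [one_pow, mul_one]
  exact Finset.sum_pos (fun i hi => (hnonneg i).lt_of_ne' (mem_support_iff.mp hi))
    (support_nonempty.mpr hp)

theorem re_aeval_eq_of_re_pow_eq {p : ℚ[X]} {z : ℂ} {c : ℝ}
    (hpow : ∀ i, p.coeff i ≠ 0 → (z ^ i).re = c) : (aeval z p).re = c * p.eval 1 := by
  rw [aeval_eq_sum_range, eval_eq_sum_range, Complex.re_sum]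
  push_cast
  rw [Finset.mul_sum]
  refine Finset.sum_congr rfl fun i _ => ?_
  by_cases hi : p.coeff i = 0
  · simp [hi]
  · simp [hpow i hi, Rat.smul_def, mul_comm]

theorem re_aeval_one (p : ℚ[X]) : (aeval (1 : ℂ) p).re = p.eval 1 := by
  rw [← map_one (algebraMap ℚ ℂ), aeval_algebraMap_apply]
  simp

end Polynomial

theorem stmt_1 (R : Polynomial ℚ) (hR : R ≠ 0)
    (hnonneg : ∀ i, 0 ≤ R.coeff i)
    (hdeg : ∀ i, R.coeff i ≠ 0 → ¬ (3 ∣ i))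
    (ξ : ℂ) (hξ : IsPrimitiveRoot ξ 3) :
    Polynomial.aeval ξ R ≠ Polynomial.aeval (1 : ℂ) R := by
  have hre : (aeval ξ R).re = -1 / 2 * R.eval 1 := re_aeval_eq_of_re_pow_eq fun i hi =>
    (hξ.pow_of_coprime i (Nat.prime_three.coprime_iff_not_dvd.mpr (hdeg i hi)).symm).re_eq_neg_half
  have hpos : (0 : ℝ) < R.eval 1 := by exact_mod_cast eval_one_pos_of_coeff_nonneg hR hnonneg
  intro h
  rw [h, re_aeval_one] at hre
  linarith
end

section
/- Let v1, v2, v3 be integers with v1+v2+v3 = 0 and gcd(v1,v2,v3) = 1, and define F1(z) = z^{v1}+z^{v2}+z^{v3} and F2(z) = z^{v1+v2}+z^{v1+v3}+z^{v2+v3} for z ∈ ℂ*. If x ∈ ℂ* satisfies F1(x) = 3 and F2(x) = 3, then x = 1. -/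
theorem stmt_5 (v₁ v₂ v₃ : ℤ) (hsum : v₁ + v₂ + v₃ = 0)
    (hgcd : Int.gcd v₁ (Int.gcd v₂ v₃) = 1)
    (x : ℂ) (hx : x ≠ 0)
    (hF1 : x ^ v₁ + x ^ v₂ + x ^ v₃ = 3)
    (hF2 : x ^ (v₁ + v₂) + x ^ (v₁ + v₃) + x ^ (v₂ + v₃) = 3) :
    x = 1 := by
  set a := x ^ v₁ with ha
  set b := x ^ v₂ with hb
  set c := x ^ v₃ with hc
  have habc : a * b * c = 1 := by
    rw [ha, hb, hc, ← zpow_add₀ hx, ← zpow_add₀ hx, hsum, zpow_zero]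
  have h2 : a * b + a * c + b * c = 3 := by
    rw [ha, hb, hc, ← zpow_add₀ hx, ← zpow_add₀ hx, ← zpow_add₀ hx]
    exact hF2
  have key : ∀ t u w : ℂ, t + u + w = 3 → t * u + t * w + u * w = 3 → t * u * w = 1 → t = 1 := by
    intro t u w h1 h2 h3
    have : (t - 1) ^ 3 = 0 := by linear_combination t ^ 2 * h1 - t * h2 + h3
    have := pow_eq_zero_iff (n := 3) (by norm_num) |>.mp this
    exact sub_eq_zero.mp this
  have hA : a = 1 := key a b c hF1 h2 habc
  have hB : b = 1 := key b a c (by linear_combination hF1) (by linear_combination h2) (by linear_combination habc)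
  have hC : c = 1 := key c a b (by linear_combination hF1) (by linear_combination h2) (by linear_combination habc)
  have bez : ∀ m n : ℤ, x ^ m = 1 → x ^ n = 1 → x ^ (Int.gcd m n : ℤ) = 1 := by
    intro m n hm hn
    rw [Int.gcd_eq_gcd_ab m n, zpow_add₀ hx, zpow_mul, zpow_mul, hm, hn, one_zpow, one_zpow,
      one_mul]
  have hd : x ^ (Int.gcd v₂ v₃ : ℤ) = 1 := bez v₂ v₃ hB hC
  have h1 : x ^ (Int.gcd v₁ (Int.gcd v₂ v₃ : ℤ) : ℤ) = 1 := bez v₁ _ hA hd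
  rw [hgcd] at h1
  simpa using h1
end

section
/- Let v1, v2, v3 be integers with v1+v2+v3 = 0, v1·v2·v3 ≠ 0 and gcd(v1,v2,v3) = 1, and let F1(z) = z^{v1}+z^{v2}+z^{v3}, F2(z) = z^{v1+v2}+z^{v1+v3}+z^{v2+v3}. If x, y ∈ ℂ* satisfy |x| > 1, F1(x) = F1(y), and F2(x) = F2(y), then x = y. -/
/-!
The numbers `x ^ vᵢ` are the roots of `T³ - F₁(x) T² + F₂(x) T - 1`, so the hypotheses say that
`x` and `y` have the same multiset of powers `{x ^ v₁, x ^ v₂, x ^ v₃}`. Taking `log ‖·‖`, the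
multisets `{vᵢ log ‖x‖}` and `{vᵢ log ‖y‖}` agree; comparing the entries of largest modulus gives
`log ‖y‖ = ± log ‖x‖`. The sign `-` would make `{v₁, v₂, v₃}` closed under negation, impossible for
three nonzero integers summing to `0`. With the sign `+`, and `log ‖x‖ ≠ 0`, equal moduli force
equal exponents, so `x ^ vᵢ = y ^ vᵢ` for each `i`, and Bézout for `gcd(v₁, v₂, v₃) = 1` gives
`x = y`.
-/

open Set

lemma insert_insert_singleton_subset_of_esymm_eq {R : Type*} [CommRing R] [NoZeroDivisors R]
    {a b c a' b' c' : R} (h₁ : a + b + c = a' + b' + c')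
    (h₂ : a * b + a * c + b * c = a' * b' + a' * c' + b' * c') (h₃ : a * b * c = a' * b' * c') :
    ({a', b', c'} : Set R) ⊆ {a, b, c} := by
  intro z hz
  have hz' : (z - a') * (z - b') * (z - c') = 0 := by
    rcases hz with rfl | rfl | rfl <;> ring
  have : (z - a) * (z - b) * (z - c) = 0 := by
    linear_combination hz' - z ^ 2 * h₁ + z * h₂ - h₃
  simpa [mul_eq_zero, sub_eq_zero, or_assoc] using this

lemma image_zpow_eq_of_sum_zpow_eq {K : Type*} [Field K] {v₁ v₂ v₃ : ℤ} (hsum : v₁ + v₂ + v₃ = 0)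
    {x y : K} (hx : x ≠ 0) (hy : y ≠ 0)
    (hF₁ : x ^ v₁ + x ^ v₂ + x ^ v₃ = y ^ v₁ + y ^ v₂ + y ^ v₃)
    (hF₂ : x ^ (v₁ + v₂) + x ^ (v₁ + v₃) + x ^ (v₂ + v₃)
      = y ^ (v₁ + v₂) + y ^ (v₁ + v₃) + y ^ (v₂ + v₃)) :
    (x ^ ·) '' {v₁, v₂, v₃} = (y ^ ·) '' {v₁, v₂, v₃} := by
  simp only [image_insert_eq, image_singleton]
  have h₂ := hF₂
  simp only [zpow_add₀ hx, zpow_add₀ hy] at h₂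
  have h₃ : x ^ v₁ * x ^ v₂ * x ^ v₃ = y ^ v₁ * y ^ v₂ * y ^ v₃ := by
    simp only [← zpow_add₀ hx, ← zpow_add₀ hy, hsum, zpow_zero]
  exact (insert_insert_singleton_subset_of_esymm_eq hF₁.symm h₂.symm h₃.symm).antisymm
    (insert_insert_singleton_subset_of_esymm_eq hF₁ h₂ h₃)

lemma abs_le_abs_of_forall_exists_mul_eq {V : Set ℤ} (hfin : V.Finite) (hV : ∃ v ∈ V, v ≠ 0)
    {s t : ℝ} (h : ∀ v ∈ V, ∃ w ∈ V, (v : ℝ) * s = w * t) : |s| ≤ |t| := by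
  obtain ⟨v₀, hv₀V, hv₀⟩ := hV
  obtain ⟨m, hmV, hmax⟩ := V.exists_max_image (fun v : ℤ ↦ |(v : ℝ)|) hfin ⟨v₀, hv₀V⟩
  obtain ⟨w, hwV, hw⟩ := h m hmV
  have hm : 0 < |(m : ℝ)| :=
    (abs_pos.mpr (Int.cast_ne_zero.mpr hv₀)).trans_le (hmax v₀ hv₀V)
  refine le_of_mul_le_mul_left ?_ hm
  calc |(m : ℝ)| * |s| = |(w : ℝ)| * |t| := by rw [← abs_mul, hw, abs_mul]
    _ ≤ |(m : ℝ)| * |t| := mul_le_mul_of_nonneg_right (hmax w hwV) (abs_nonneg t)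

section NormedField

variable {K : Type*} [NormedField K] {V : Set ℤ} {x y : K}

lemma mul_log_norm_eq_of_zpow_eq {v w : ℤ} (h : x ^ v = y ^ w) :
    (v : ℝ) * Real.log ‖x‖ = w * Real.log ‖y‖ := by
  simpa only [norm_zpow, Real.log_zpow] using congrArg (fun z : K ↦ Real.log ‖z‖) h

lemma forall_exists_mul_log_norm_eq (h : (x ^ ·) '' V = (y ^ ·) '' V) :
    ∀ v ∈ V, ∃ w ∈ V, (v : ℝ) * Real.log ‖y‖ = w * Real.log ‖x‖ := by
  intro v hv
  obtain ⟨w, hwV, hw⟩ : y ^ v ∈ (x ^ ·) '' V := h ▸ mem_image_of_mem _ hv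
  exact ⟨w, hwV, (mul_log_norm_eq_of_zpow_eq hw).symm⟩

lemma log_norm_eq_or_eq_neg_of_image_zpow_eq (hfin : V.Finite) (hV : ∃ v ∈ V, v ≠ 0)
    (h : (x ^ ·) '' V = (y ^ ·) '' V) :
    Real.log ‖y‖ = Real.log ‖x‖ ∨ Real.log ‖y‖ = -Real.log ‖x‖ :=
  abs_eq_abs.mp <| le_antisymm
    (abs_le_abs_of_forall_exists_mul_eq hfin hV (forall_exists_mul_log_norm_eq h))
    (abs_le_abs_of_forall_exists_mul_eq hfin hV (forall_exists_mul_log_norm_eq h.symm))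

lemma zpow_eq_zpow_of_image_zpow_eq (hx : 1 < ‖x‖) (hs : Real.log ‖y‖ = Real.log ‖x‖)
    (h : (x ^ ·) '' V = (y ^ ·) '' V) : ∀ v ∈ V, x ^ v = y ^ v := by
  intro v hv
  obtain ⟨w, hwV, hw⟩ : y ^ v ∈ (x ^ ·) '' V := h ▸ mem_image_of_mem _ hv
  have hwv := mul_log_norm_eq_of_zpow_eq hw
  rw [hs] at hwv
  obtain rfl : w = v := by exact_mod_cast mul_right_cancel₀ (Real.log_pos hx).ne' hwv
  exact hw

lemma neg_mem_of_image_zpow_eq (hx : 1 < ‖x‖) (hs : Real.log ‖y‖ = -Real.log ‖x‖)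
    (h : (x ^ ·) '' V = (y ^ ·) '' V) : ∀ v ∈ V, -v ∈ V := by
  intro v hv
  obtain ⟨w, hwV, hw⟩ : y ^ v ∈ (x ^ ·) '' V := h ▸ mem_image_of_mem _ hv
  have hwv := mul_log_norm_eq_of_zpow_eq hw
  rw [hs, mul_neg, ← neg_mul] at hwv
  obtain rfl : w = -v := by exact_mod_cast mul_right_cancel₀ (Real.log_pos hx).ne' hwv
  exact hwV

end NormedField

lemma zpow_gcd_eq_zpow_gcd {G₀ : Type*} [GroupWithZero G₀] {x y : G₀} (hx : x ≠ 0) (hy : y ≠ 0)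
    {a b : ℤ} (ha : x ^ a = y ^ a) (hb : x ^ b = y ^ b) :
    x ^ (Int.gcd a b : ℤ) = y ^ (Int.gcd a b : ℤ) := by
  rw [Int.gcd_eq_gcd_ab, zpow_add₀ hx, zpow_add₀ hy, zpow_mul, zpow_mul, zpow_mul, zpow_mul,
    ha, hb]

theorem stmt_6 (v₁ v₂ v₃ : ℤ) (hsum : v₁ + v₂ + v₃ = 0)
    (hnz : v₁ * v₂ * v₃ ≠ 0)
    (hgcd : Int.gcd v₁ (Int.gcd v₂ v₃) = 1)
    (x y : ℂ) (hx : x ≠ 0) (hy : y ≠ 0)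
    (habs : 1 < ‖x‖)
    (hF1 : x ^ v₁ + x ^ v₂ + x ^ v₃ = y ^ v₁ + y ^ v₂ + y ^ v₃)
    (hF2 : x ^ (v₁ + v₂) + x ^ (v₁ + v₃) + x ^ (v₂ + v₃)
         = y ^ (v₁ + v₂) + y ^ (v₁ + v₃) + y ^ (v₂ + v₃)) :
    x = y := by
  obtain ⟨⟨hv₁, hv₂⟩, hv₃⟩ := And.imp_left mul_ne_zero_iff.mp (mul_ne_zero_iff.mp hnz)
  have hpow := image_zpow_eq_of_sum_zpow_eq hsum hx hy hF1 hF2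
  rcases log_norm_eq_or_eq_neg_of_image_zpow_eq (toFinite _) ⟨v₁, by simp, hv₁⟩ hpow
    with hs | hs
  · have heq := zpow_eq_zpow_of_image_zpow_eq habs hs hpow
    have h₂₃ := zpow_gcd_eq_zpow_gcd hx hy (heq v₂ (by simp)) (heq v₃ (by simp))
    simpa [hgcd] using zpow_gcd_eq_zpow_gcd hx hy (heq v₁ (by simp)) h₂₃
  · have hneg := neg_mem_of_image_zpow_eq habs hs hpow v₁ (by simp)
    simp only [mem_insert_iff, mem_singleton_iff] at hneg
    omega
end

section
/- Let v1, v2, v3 be integers with v1+v2+v3 = 0 and gcd(v1,v2,v3) = 1, and let B be the ℂ-subalgebra of the Laurent polynomial ring ℂ[z,z^{-1}] generated by F1 = z^{v1}+z^{v2}+z^{v3} and F2 = z^{v1+v2}+z^{v1+v3}+z^{v2+v3}. Then ℂ[z,z^{-1}] is finitely generated as a B-module. -/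
open LaurentPolynomial Polynomial

lemma adjoin_T_top : Algebra.adjoin ℂ ({T 1, T (-1)} : Set (LaurentPolynomial ℂ)) = ⊤ := by
  rw [eq_top_iff]
  rintro p -
  refine LaurentPolynomial.induction_on p (fun a => Subalgebra.algebraMap_mem _ a)
    (fun hp hq => add_mem hp hq) (fun n a h => ?_) (fun n a h => ?_)
  · have : (LaurentPolynomial.C a * T ((n:ℤ)+1) : LaurentPolynomial ℂ)
        = (LaurentPolynomial.C a * T n) * T 1 := by rw [T_add]; ring
    rw [this]
    exact mul_mem h (Algebra.subset_adjoin (by simp))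
  · have : (LaurentPolynomial.C a * T (-(n:ℤ)-1) : LaurentPolynomial ℂ)
        = (LaurentPolynomial.C a * T (-n)) * T (-1) := by
      rw [show (-(n:ℤ)-1) = (-n) + (-1) by ring, T_add]; ring
    rw [this]
    exact mul_mem h (Algebra.subset_adjoin (by simp))

-- ring identity: T v₁ is a root of the cubic
lemma cubic_root (v₁ v₂ v₃ : ℤ) (hsum : v₁ + v₂ + v₃ = 0) :
    (T v₁ : LaurentPolynomial ℂ)^3 - (T v₁ + T v₂ + T v₃) * (T v₁)^2
      + (T (v₁+v₂) + T (v₁+v₃) + T (v₂+v₃)) * T v₁ - 1 = 0 := by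
  have h1 : (T v₁ * T v₂ * T v₃ : LaurentPolynomial ℂ) = 1 := by
    rw [← T_add, ← T_add, hsum, T_zero]
  simp only [T_add]
  linear_combination h1

lemma T_integral (v₁ v₂ v₃ : ℤ) (hsum : v₁ + v₂ + v₃ = 0)
    (B : Subalgebra ℂ (LaurentPolynomial ℂ))
    (h1 : (T v₁ + T v₂ + T v₃ : LaurentPolynomial ℂ) ∈ B)
    (h2 : (T (v₁+v₂) + T (v₁+v₃) + T (v₂+v₃) : LaurentPolynomial ℂ) ∈ B) :
    IsIntegral B (T v₁ : LaurentPolynomial ℂ) := by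
  refine ⟨X^3 - Polynomial.C ⟨_, h1⟩ * X^2 + Polynomial.C ⟨_, h2⟩ * X - Polynomial.C 1, ?_, ?_⟩
  · monicity!
  · have : algebraMap B (LaurentPolynomial ℂ) ⟨_, h1⟩ = T v₁ + T v₂ + T v₃ := rfl
    have : algebraMap B (LaurentPolynomial ℂ) ⟨_, h2⟩ = T (v₁+v₂) + T (v₁+v₃) + T (v₂+v₃) := rfl
    simp only [Polynomial.eval₂_sub, Polynomial.eval₂_add, Polynomial.eval₂_mul,
      Polynomial.eval₂_pow, Polynomial.eval₂_X, Polynomial.eval₂_C, Polynomial.eval₂_one, map_one]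
    rw [show algebraMap B (LaurentPolynomial ℂ) ⟨_, h1⟩ = T v₁ + T v₂ + T v₃ from rfl,
      show algebraMap B (LaurentPolynomial ℂ) ⟨_, h2⟩ = T (v₁+v₂) + T (v₁+v₃) + T (v₂+v₃) from rfl]
    exact cubic_root v₁ v₂ v₃ hsum

lemma exists_comb (v₁ v₂ v₃ : ℤ) (hsum : v₁ + v₂ + v₃ = 0)
    (hgcd : Int.gcd v₁ (Int.gcd v₂ v₃) = 1) (n : ℤ) :
    ∃ a b c : ℕ, (a:ℤ)*v₁ + (b:ℤ)*v₂ + (c:ℤ)*v₃ = n := by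
  -- Bezout
  have h₂₃ : (Int.gcd v₂ v₃ : ℤ) = v₂ * Int.gcdA v₂ v₃ + v₃ * Int.gcdB v₂ v₃ :=
    Int.gcd_eq_gcd_ab v₂ v₃
  have h₁ : (1 : ℤ) = v₁ * Int.gcdA v₁ (Int.gcd v₂ v₃)
      + (Int.gcd v₂ v₃ : ℤ) * Int.gcdB v₁ (Int.gcd v₂ v₃) := by
    have := Int.gcd_eq_gcd_ab v₁ (Int.gcd v₂ v₃)
    rw [hgcd] at this
    exact_mod_cast this
  set A := Int.gcdA v₁ (Int.gcd v₂ v₃)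
  set Bz := Int.gcdB v₁ (Int.gcd v₂ v₃)
  set A' := Int.gcdA v₂ v₃
  set B' := Int.gcdB v₂ v₃
  have key : (n*A) * v₁ + (n*(Bz*A')) * v₂ + (n*(Bz*B')) * v₃ = n := by
    have : (1:ℤ) = v₁ * A + (v₂ * A' + v₃ * B') * Bz := by rw [h₁, h₂₃]
    linear_combination n * this.symm
  set x := n*A; set y := n*(Bz*A'); set z := n*(Bz*B')
  set N : ℤ := x.natAbs + y.natAbs + z.natAbs with hN
  clear_value x y z
  refine ⟨(x+N).toNat, (y+N).toNat, (z+N).toNat, ?_⟩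
  have hx : ((x+N).toNat : ℤ) = x + N := Int.toNat_of_nonneg (by omega)
  have hy : ((y+N).toNat : ℤ) = y + N := Int.toNat_of_nonneg (by omega)
  have hz : ((z+N).toNat : ℤ) = z + N := Int.toNat_of_nonneg (by omega)
  rw [hx, hy, hz]
  linear_combination key + N * hsum

theorem stmt_9 (v₁ v₂ v₃ : ℤ) (hsum : v₁ + v₂ + v₃ = 0)
    (hgcd : Int.gcd v₁ (Int.gcd v₂ v₃) = 1) :
    Module.Finite
      (Algebra.adjoin ℂ
        ({T v₁ + T v₂ + T v₃, T (v₁ + v₂) + T (v₁ + v₃) + T (v₂ + v₃)} :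
          Set (LaurentPolynomial ℂ)))
      (LaurentPolynomial ℂ) := by
  classical
  set B := Algebra.adjoin ℂ
      ({T v₁ + T v₂ + T v₃, T (v₁ + v₂) + T (v₁ + v₃) + T (v₂ + v₃)} :
        Set (LaurentPolynomial ℂ)) with hB
  have m1 : (T v₁ + T v₂ + T v₃ : LaurentPolynomial ℂ) ∈ B :=
    Algebra.subset_adjoin (Or.inl rfl)
  have m2 : (T (v₁+v₂) + T (v₁+v₃) + T (v₂+v₃) : LaurentPolynomial ℂ) ∈ B :=
    Algebra.subset_adjoin (Or.inr rfl)
  -- integrality of T v₁, T v₂, T v₃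
  have i₁ : IsIntegral B (T v₁ : LaurentPolynomial ℂ) := T_integral v₁ v₂ v₃ hsum B m1 m2
  have i₂ : IsIntegral B (T v₂ : LaurentPolynomial ℂ) := by
    refine T_integral v₂ v₃ v₁ (by linarith) B ?_ ?_
    · rwa [show (T v₂ + T v₃ + T v₁ : LaurentPolynomial ℂ) = T v₁ + T v₂ + T v₃ by ring]
    · rw [show v₂+v₁ = v₁+v₂ by ring, show v₃+v₁ = v₁+v₃ by ring,
        show (T (v₂+v₃) + T (v₁+v₂) + T (v₁+v₃) : LaurentPolynomial ℂ)
          = T (v₁+v₂) + T (v₁+v₃) + T (v₂+v₃) by ring]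
      exact m2
  have i₃ : IsIntegral B (T v₃ : LaurentPolynomial ℂ) := by
    refine T_integral v₃ v₁ v₂ (by linarith) B ?_ ?_
    · rwa [show (T v₃ + T v₁ + T v₂ : LaurentPolynomial ℂ) = T v₁ + T v₂ + T v₃ by ring]
    · rw [show v₃+v₁ = v₁+v₃ by ring, show v₃+v₂ = v₂+v₃ by ring,
        show (T (v₁+v₃) + T (v₂+v₃) + T (v₁+v₂) : LaurentPolynomial ℂ)
          = T (v₁+v₂) + T (v₁+v₃) + T (v₂+v₃) by ring]
      exact m2
  set ic := integralClosure B (LaurentPolynomial ℂ) with hic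
  have hTmem : ∀ n : ℤ, (T n : LaurentPolynomial ℂ) ∈ ic := by
    intro n
    obtain ⟨a, b, c, habc⟩ := exists_comb v₁ v₂ v₃ hsum hgcd n
    have : (T n : LaurentPolynomial ℂ) = T v₁ ^ a * T v₂ ^ b * T v₃ ^ c := by
      rw [T_pow, T_pow, T_pow, ← T_add, ← T_add]
      rw [show (a:ℤ)*v₁ + (b:ℤ)*v₂ + (c:ℤ)*v₃ = n from habc]
    rw [this]
    exact mul_mem (mul_mem (pow_mem i₁ a) (pow_mem i₂ b)) (pow_mem i₃ c)
  have htop : Subalgebra.restrictScalars ℂ ic = ⊤ := by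
    rw [eq_top_iff, ← adjoin_T_top]
    refine Algebra.adjoin_le ?_
    rintro x (rfl | rfl)
    · exact hTmem 1
    · exact hTmem (-1)
  haveI hii : Algebra.IsIntegral B (LaurentPolynomial ℂ) := by
    refine ⟨fun x => ?_⟩
    have hx : x ∈ Subalgebra.restrictScalars ℂ ic := htop ▸ Algebra.mem_top
    exact hx
  haveI hft : Algebra.FiniteType ℂ (LaurentPolynomial ℂ) := by
    refine ⟨{T 1, T (-1)}, ?_⟩
    simpa using adjoin_T_top
  haveI hftB : Algebra.FiniteType B (LaurentPolynomial ℂ) :=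
    Algebra.FiniteType.of_restrictScalars_finiteType ℂ B (LaurentPolynomial ℂ)
  exact Algebra.IsIntegral.finite
end
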